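/- arXiv:1706.00821 — 2 statements merged into one kernel-verified Lean document; each statement's English description precedes it below -/
import Mathlib

section
/- Let X₁, X₂, Y be Banach spaces, let r ≥ 1 and p₁, p₂, q₁, q₂, s₁, s₂ ∈ [1,∞) with q₁ ≥ p₁, q₂ ≥ p₂, and 1/r − 1/p₁ − 1/p₂ + 1/q₁ + 1/q₂ > 0. Define 1/s₂ = 1/r − 1/p₂ + 1/q₂ and 1/s₁ = 1/r − 1/p₁ − 1/p₂ + 1/q₁ + 1/q₂. If a bilinear operator T : X₁ × X₂ → Y is multiple (r; p₁,p₂)-summing with constant C, then for all finite families (x¹_i) ⊂ X₁, (x²_j) ⊂ X₂, (∑_i (∑_j ‖T(x¹_i, x²_j)‖^{s₂})^{s₁/s₂})^{1/s₁} ≤ C · ‖(x¹_i)‖_{w,q₁} · ‖(x²_j)‖_{w,q₂}. -/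
/-!
Freeze one variable and test the other against nonnegative weights `w`. Hölder's inequality gives
`‖(w_j y_j)‖_{w,p} ≤ ‖w‖_c ‖y‖_{w,q}` for `1/p = 1/c + 1/q`, so a bound
`‖(w_j b_j)‖_r ≤ K ‖(w_j y_j)‖_{w,p}` valid for all weights yields `‖b‖_s ≤ K ‖y‖_{w,q}` with
`1/s = 1/r - 1/c`: test it on the weight `w = b^(s/c)`, for which Hölder's inequality
`‖w b‖_r ≤ ‖w‖_c ‖b‖_s` is an equality. Applied to the second variable this turns the
`(r; p₁, p₂)` bound into an `ℓ_{s₂}(ℓ_r)` bound with `q₂`; after swapping the order of the mixed norm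
and using `ℓ_r ⊆ ℓ_{s₂}`, applying it to the first variable gives the `ℓ_{s₁}(ℓ_{s₂})` bound.
-/

open scoped BigOperators

/-- The weak ℓ^p norm of a finite family in a normed space:
`sup_{φ ∈ B_{X'}} (∑ j |φ(x_j)|^p)^(1/p)`. -/
noncomputable def weakNorm {X : Type*} [NormedAddCommGroup X] [NormedSpace ℝ X]
    {n : ℕ} (x : Fin n → X) (p : ℝ) : ℝ :=
  ⨆ φ : {φ : X →L[ℝ] ℝ // ‖φ‖ ≤ 1}, (∑ j, |φ.1 (x j)| ^ p) ^ (1 / p)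

open Finset

noncomputable def ellNorm {ι : Type*} [Fintype ι] (p : ℝ) (a : ι → ℝ) : ℝ :=
  (∑ i, a i ^ p) ^ (1 / p)

section ellNorm

variable {ι κ : Type*} [Fintype ι] [Fintype κ] {a b : ι → ℝ} {p q r s : ℝ}

lemma ellNorm_nonneg (ha : 0 ≤ a) : 0 ≤ ellNorm p a :=
  Real.rpow_nonneg (sum_nonneg fun i _ => Real.rpow_nonneg (ha i) p) _

lemma ellNorm_rpow (ha : 0 ≤ a) (p q : ℝ) : ellNorm q a ^ p = (∑ i, a i ^ q) ^ (p / q) := by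
  rw [ellNorm, ← Real.rpow_mul (sum_nonneg fun i _ => Real.rpow_nonneg (ha i) q),
    one_div_mul_eq_div]

lemma ellNorm_rpow_self (ha : 0 ≤ a) (hp : p ≠ 0) : ellNorm p a ^ p = ∑ i, a i ^ p := by
  rw [ellNorm_rpow ha, div_self hp, Real.rpow_one]

lemma ellNorm_le_of_sum_rpow_le (ha : 0 ≤ a) (hp : 0 < p) {M : ℝ} (hM : 0 ≤ M)
    (h : ∑ i, a i ^ p ≤ M ^ p) : ellNorm p a ≤ M := by
  rwa [← Real.rpow_le_rpow_iff (ellNorm_nonneg ha) hM hp, ellNorm_rpow_self ha hp.ne']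

lemma apply_le_ellNorm (ha : 0 ≤ a) (hp : 0 < p) (i : ι) : a i ≤ ellNorm p a := by
  rw [← Real.rpow_le_rpow_iff (ha i) (ellNorm_nonneg ha) hp, ellNorm_rpow_self ha hp.ne']
  exact single_le_sum (fun j _ => Real.rpow_nonneg (ha j) p) (mem_univ i)

lemma ellNorm_mono (ha : 0 ≤ a) (hab : a ≤ b) (hp : 0 < p) : ellNorm p a ≤ ellNorm p b := by
  have hb : 0 ≤ b := ha.trans hab
  refine ellNorm_le_of_sum_rpow_le ha hp (ellNorm_nonneg hb) ?_
  rw [ellNorm_rpow_self hb hp.ne']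
  exact sum_le_sum fun i _ => Real.rpow_le_rpow (ha i) (hab i) hp.le

lemma ellNorm_antitone_exponent (ha : 0 ≤ a) (hr : 0 < r) (hrs : r ≤ s) :
    ellNorm s a ≤ ellNorm r a := by
  set M := ellNorm r a
  have hM : 0 ≤ M := ellNorm_nonneg ha
  have hs : s - r + r ≠ 0 := by linarith
  refine ellNorm_le_of_sum_rpow_le ha (hr.trans_le hrs) hM ?_
  calc ∑ i, a i ^ s = ∑ i, a i ^ (s - r) * a i ^ r := by
        simp only [← Real.rpow_add' (ha _) hs, sub_add_cancel]
    _ ≤ ∑ i, M ^ (s - r) * a i ^ r := sum_le_sum fun i _ => mul_le_mul_of_nonneg_right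
        (Real.rpow_le_rpow (ha i) (apply_le_ellNorm ha hr i) (sub_nonneg.2 hrs))
        (Real.rpow_nonneg (ha i) r)
    _ = M ^ s := by
        rw [← mul_sum, ← ellNorm_rpow_self ha hr.ne', ← Real.rpow_add' hM hs, sub_add_cancel]

lemma ellNorm_const_mul {c : ℝ} (hc : 0 ≤ c) (ha : 0 ≤ a) (hp : p ≠ 0) :
    ellNorm p (fun i => c * a i) = c * ellNorm p a := by
  simp only [ellNorm, Real.mul_rpow hc (ha _), ← mul_sum]
  rw [Real.mul_rpow (Real.rpow_nonneg hc p) (sum_nonneg fun i _ => Real.rpow_nonneg (ha i) p),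
    ← Real.rpow_mul hc, mul_one_div_cancel hp, Real.rpow_one]

lemma ellNorm_norm_smul {E : Type*} [SeminormedAddCommGroup E] [NormedSpace ℝ E] {c : ℝ}
    (hc : 0 ≤ c) (f : ι → E) (hp : p ≠ 0) :
    ellNorm p (fun i => ‖c • f i‖) = c * ellNorm p (fun i => ‖f i‖) := by
  simp only [norm_smul, Real.norm_of_nonneg hc]
  exact ellNorm_const_mul hc (fun i => norm_nonneg _) hp

lemma ellNorm_ellNorm (a : ι → κ → ℝ) (ha : 0 ≤ a) (hp : p ≠ 0) :
    ellNorm p (fun i => ellNorm p (a i)) = (∑ i, ∑ j, a i j ^ p) ^ (1 / p) := by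
  show (∑ i, ellNorm p (a i) ^ p) ^ (1 / p) = _
  simp only [ellNorm_rpow_self (ha _) hp]

lemma ellNorm_ellNorm_comm (a : ι → κ → ℝ) (ha : 0 ≤ a) (hp : p ≠ 0) :
    ellNorm p (fun i => ellNorm p (a i)) = ellNorm p (fun j => ellNorm p (fun i => a i j)) := by
  rw [ellNorm_ellNorm a ha hp, ellNorm_ellNorm (fun j i => a i j) (fun j i => ha i j) hp, sum_comm]

lemma ellNorm_mul_le (h : p.HolderTriple q r) (ha : 0 ≤ a) (hb : 0 ≤ b) :
    ellNorm r (a * b) ≤ ellNorm p a * ellNorm q b := by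
  refine ellNorm_le_of_sum_rpow_le (mul_nonneg ha hb) h.pos'
    (mul_nonneg (ellNorm_nonneg ha) (ellNorm_nonneg hb)) ?_
  rw [Real.mul_rpow (ellNorm_nonneg ha) (ellNorm_nonneg hb), ellNorm_rpow ha, ellNorm_rpow hb]
  exact Real.Lr_rpow_le_Lp_mul_Lq_of_nonneg univ h (fun i _ => ha i) (fun i _ => hb i)

lemma exists_ellNorm_mul_eq (h : p.HolderTriple q r) (hb : 0 ≤ b) :
    ∃ w : ι → ℝ, 0 ≤ w ∧ ellNorm p w = ellNorm q b ^ (q / p) ∧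
      ellNorm r (w * b) = ellNorm p w * ellNorm q b := by
  obtain ⟨hp, hq, hr⟩ := h.all_pos
  have hS : 0 ≤ ∑ i, b i ^ q := sum_nonneg fun i _ => Real.rpow_nonneg (hb i) q
  have hw : ∀ i, (b i ^ (q / p)) ^ p = b i ^ q := fun i => by
    rw [← Real.rpow_mul (hb i), div_mul_cancel₀ q hp.ne']
  have hwb : ∀ i, (b i ^ (q / p) * b i) ^ r = b i ^ q := fun i => by
    have : (q / p + 1) * r = q := by
      have := h.one_div_eq
      field_simp at this ⊢
      linarith
    rw [← Real.rpow_add_one' (hb i) (by positivity), ← Real.rpow_mul (hb i), this]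
  refine ⟨fun i => b i ^ (q / p), fun i => Real.rpow_nonneg (hb i) _, ?_, ?_⟩
  · rw [ellNorm_rpow hb]
    simp only [ellNorm, hw]
    congr 1
    field_simp
  · simp only [ellNorm, Pi.mul_apply, hw, hwb]
    rw [← Real.rpow_add' hS (by positivity), h.one_div_eq]

end ellNorm

section weakNorm

variable {X : Type*} [NormedAddCommGroup X] [NormedSpace ℝ X] {n : ℕ} {p q c : ℝ}

instance : Nonempty {φ : X →L[ℝ] ℝ // ‖φ‖ ≤ 1} := ⟨⟨0, by simp⟩⟩

lemma weakNorm_nonneg (x : Fin n → X) (p : ℝ) : 0 ≤ weakNorm x p :=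
  Real.iSup_nonneg fun _ => ellNorm_nonneg fun _ => abs_nonneg _

lemma ellNorm_le_weakNorm (x : Fin n → X) (hp : 0 < p) (φ : X →L[ℝ] ℝ) (hφ : ‖φ‖ ≤ 1) :
    ellNorm p (fun j => |φ (x j)|) ≤ weakNorm x p := by
  refine le_ciSup (f := fun φ : {φ : X →L[ℝ] ℝ // ‖φ‖ ≤ 1} => ellNorm p fun j => |φ.1 (x j)|)
    ⟨ellNorm p fun j => ‖x j‖, ?_⟩ ⟨φ, hφ⟩
  rintro _ ⟨ψ, rfl⟩
  exact ellNorm_mono (fun _ => abs_nonneg _)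
    (fun j => (ψ.1.le_of_opNorm_le ψ.2 (x j)).trans_eq (one_mul _)) hp

lemma weakNorm_le (x : Fin n → X) {M : ℝ}
    (h : ∀ φ : X →L[ℝ] ℝ, ‖φ‖ ≤ 1 → ellNorm p (fun j => |φ (x j)|) ≤ M) : weakNorm x p ≤ M :=
  ciSup_le fun φ => h φ.1 φ.2

lemma weakNorm_smul_le (h : c.HolderTriple q p) {w : Fin n → ℝ} (hw : 0 ≤ w) (y : Fin n → X) :
    weakNorm (w • y) p ≤ ellNorm c w * weakNorm y q :=
  weakNorm_le _ fun φ hφ => calc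
    ellNorm p (fun j => |φ ((w • y) j)|) = ellNorm p (w * fun j => |φ (y j)|) := by
      congr 1
      ext j
      simp [abs_mul, abs_of_nonneg (hw j)]
    _ ≤ ellNorm c w * ellNorm q (fun j => |φ (y j)|) :=
      ellNorm_mul_le h hw fun _ => abs_nonneg _
    _ ≤ ellNorm c w * weakNorm y q :=
      mul_le_mul_of_nonneg_left (ellNorm_le_weakNorm y h.symm.pos φ hφ) (ellNorm_nonneg hw)

lemma ellNorm_le_of_forall_weighted_le {y : Fin n → X} {b : Fin n → ℝ} (hb : 0 ≤ b)
    {K r s : ℝ} (hK : 0 ≤ K) (hp : 0 < p) (hpq : p ≤ q) (hs : 0 < s)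
    (hrs : 1 / s = 1 / r - 1 / p + 1 / q)
    (H : ∀ w : Fin n → ℝ, 0 ≤ w → ellNorm r (w * b) ≤ K * weakNorm (w • y) p) :
    ellNorm s b ≤ K * weakNorm y q := by
  rcases hpq.eq_or_lt with rfl | hpq
  · have hsr : s = r := by simpa using hrs
    simpa [hsr] using H 1 zero_le_one
  set c := (1 / p - 1 / q)⁻¹
  have hc : 0 < c := inv_pos.2 (sub_pos.2 (one_div_lt_one_div_of_lt hp hpq))
  have hcqp : c.HolderTriple q p := ⟨by simp [c], hc, hp.trans hpq⟩
  have hcsr : c.HolderTriple s r := ⟨by simp only [c, ← one_div]; linarith, hc, hs⟩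
  obtain ⟨w, hw, hwc, hwb⟩ := exists_ellNorm_mul_eq hcsr hb
  rcases (ellNorm_nonneg hb : 0 ≤ ellNorm s b).eq_or_lt with hb0 | hbpos
  · rw [← hb0]
    exact mul_nonneg hK (weakNorm_nonneg y q)
  have hwpos : 0 < ellNorm c w := hwc ▸ Real.rpow_pos_of_pos hbpos _
  refine le_of_mul_le_mul_left ?_ hwpos
  calc ellNorm c w * ellNorm s b = ellNorm r (w * b) := hwb.symm
    _ ≤ K * weakNorm (w • y) p := H w hw
    _ ≤ K * (ellNorm c w * weakNorm y q) :=
      mul_le_mul_of_nonneg_left (weakNorm_smul_le hcqp hw y) hK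
    _ = ellNorm c w * (K * weakNorm y q) := by ring

end weakNorm

section bilinear

variable {X₁ X₂ Y : Type*} [NormedAddCommGroup X₁] [NormedSpace ℝ X₁]
  [NormedAddCommGroup X₂] [NormedSpace ℝ X₂] [NormedAddCommGroup Y] [NormedSpace ℝ Y]
  (T : X₁ →L[ℝ] X₂ →L[ℝ] Y) {n₁ n₂ : ℕ} {K r p q s : ℝ}

lemma ellNorm_ellNorm_le_of_summing_right (hK : 0 ≤ K) (hr : 0 < r) (hp : 0 < p) (hpq : p ≤ q)
    (hs : 0 < s) (hrs : 1 / s = 1 / r - 1 / p + 1 / q) (x : Fin n₁ → X₁)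
    (hT : ∀ y : Fin n₂ → X₂, (∑ i, ∑ j, ‖T (x i) (y j)‖ ^ r) ^ (1 / r) ≤ K * weakNorm y p)
    (y : Fin n₂ → X₂) :
    ellNorm s (fun j => ellNorm r fun i => ‖T (x i) (y j)‖) ≤ K * weakNorm y q :=
  ellNorm_le_of_forall_weighted_le (fun _ => ellNorm_nonneg fun _ => norm_nonneg _)
    hK hp hpq hs hrs fun w hw => calc
      ellNorm r (w * fun j => ellNorm r fun i => ‖T (x i) (y j)‖)
          = ellNorm r (fun j => ellNorm r fun i => ‖T (x i) ((w • y) j)‖) := by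
        congr 1
        ext j
        simp [ellNorm_norm_smul (hw j) _ hr.ne']
      _ = (∑ i, ∑ j, ‖T (x i) ((w • y) j)‖ ^ r) ^ (1 / r) := by
        rw [ellNorm_ellNorm _ (fun _ _ => norm_nonneg _) hr.ne', sum_comm]
      _ ≤ K * weakNorm (w • y) p := hT (w • y)

lemma ellNorm_ellNorm_le_of_mixed_left {t : ℝ} (hK : 0 ≤ K) (hr : 0 < r) (hrt : r ≤ t)
    (hp : 0 < p) (hpq : p ≤ q) (hs : 0 < s) (hts : 1 / s = 1 / t - 1 / p + 1 / q)
    (y : Fin n₂ → X₂)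
    (hT : ∀ x : Fin n₁ → X₁,
      ellNorm t (fun j => ellNorm r fun i => ‖T (x i) (y j)‖) ≤ K * weakNorm x p)
    (x : Fin n₁ → X₁) :
    ellNorm s (fun i => ellNorm t fun j => ‖T (x i) (y j)‖) ≤ K * weakNorm x q := by
  have ht : 0 < t := hr.trans_le hrt
  refine ellNorm_le_of_forall_weighted_le (fun _ => ellNorm_nonneg fun _ => norm_nonneg _)
    hK hp hpq hs hts fun w hw => ?_
  calc ellNorm t (w * fun i => ellNorm t fun j => ‖T (x i) (y j)‖)
      = ellNorm t (fun i => ellNorm t fun j => ‖T ((w • x) i) (y j)‖) := by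
        congr 1
        ext i
        simp [ellNorm_norm_smul (hw i) _ ht.ne']
    _ = ellNorm t (fun j => ellNorm t fun i => ‖T ((w • x) i) (y j)‖) :=
        ellNorm_ellNorm_comm _ (fun _ _ => norm_nonneg _) ht.ne'
    _ ≤ ellNorm t (fun j => ellNorm r fun i => ‖T ((w • x) i) (y j)‖) :=
        ellNorm_mono (fun _ => ellNorm_nonneg fun _ => norm_nonneg _)
          (fun _ => ellNorm_antitone_exponent (fun _ => norm_nonneg _) hr hrt) ht
    _ ≤ K * weakNorm (w • x) p := hT (w • x)

end bilinear

theorem bilinear_anisotropic_inclusion_general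
    {X₁ X₂ Y : Type*} [NormedAddCommGroup X₁] [NormedSpace ℝ X₁]
    [NormedAddCommGroup X₂] [NormedSpace ℝ X₂]
    [NormedAddCommGroup Y] [NormedSpace ℝ Y]
    (T : X₁ →L[ℝ] X₂ →L[ℝ] Y)
    (r p₁ p₂ q₁ q₂ s₁ s₂ : ℝ) (hr : 1 ≤ r)
    (hp₁ : 1 ≤ p₁) (hp₂ : 1 ≤ p₂) (hq₁ : p₁ ≤ q₁) (hq₂ : p₂ ≤ q₂)
    (hpos : 0 < 1 / r - 1 / p₁ - 1 / p₂ + 1 / q₁ + 1 / q₂)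
    (hs₂ : 1 / s₂ = 1 / r - 1 / p₂ + 1 / q₂)
    (hs₁ : 1 / s₁ = 1 / r - 1 / p₁ - 1 / p₂ + 1 / q₁ + 1 / q₂)
    (C : ℝ) (hC : 0 ≤ C)
    (hT : ∀ (n₁ n₂ : ℕ) (x1 : Fin n₁ → X₁) (x2 : Fin n₂ → X₂),
      (∑ i, ∑ j, ‖T (x1 i) (x2 j)‖ ^ r) ^ (1 / r) ≤
        C * weakNorm x1 p₁ * weakNorm x2 p₂) :
    ∀ (n₁ n₂ : ℕ) (x1 : Fin n₁ → X₁) (x2 : Fin n₂ → X₂),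
      (∑ i, (∑ j, ‖T (x1 i) (x2 j)‖ ^ s₂) ^ (s₁ / s₂)) ^ (1 / s₁) ≤
        C * weakNorm x1 q₁ * weakNorm x2 q₂ := by
  intro n₁ n₂ x1 x2
  have hr₀ : 0 < r := by linarith
  have hp₁₀ : 0 < p₁ := by linarith
  have hp₂₀ : 0 < p₂ := by linarith
  have hpq₁ := one_div_le_one_div_of_le hp₁₀ hq₁
  have hpq₂ := one_div_le_one_div_of_le hp₂₀ hq₂
  have hs₁₀ : 0 < s₁ := one_div_pos.1 (hs₁ ▸ hpos)
  have hs₂₀ : 0 < s₂ := one_div_pos.1 (by linarith)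
  have hrs₂ : r ≤ s₂ := le_of_one_div_le_one_div hs₂₀ (by linarith)
  have right (x : Fin n₁ → X₁) :
      ellNorm s₂ (fun j => ellNorm r fun i => ‖T (x i) (x2 j)‖) ≤
        C * weakNorm x2 q₂ * weakNorm x p₁ :=
    (ellNorm_ellNorm_le_of_summing_right T (mul_nonneg hC (weakNorm_nonneg x p₁)) hr₀ hp₂₀ hq₂
      hs₂₀ hs₂ x (hT n₁ n₂ x) x2).trans_eq (mul_right_comm _ _ _)
  calc (∑ i, (∑ j, ‖T (x1 i) (x2 j)‖ ^ s₂) ^ (s₁ / s₂)) ^ (1 / s₁)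
      = ellNorm s₁ (fun i => ellNorm s₂ fun j => ‖T (x1 i) (x2 j)‖) := by
        show _ = (∑ i, ellNorm s₂ (fun j => ‖T (x1 i) (x2 j)‖) ^ s₁) ^ (1 / s₁)
        simp only [ellNorm_rpow (fun _ => norm_nonneg _)]
    _ ≤ C * weakNorm x2 q₂ * weakNorm x1 q₁ :=
        ellNorm_ellNorm_le_of_mixed_left T (mul_nonneg hC (weakNorm_nonneg x2 q₂)) hr₀ hrs₂
          hp₁₀ hq₁ hs₁₀ (by rw [hs₁, hs₂]; ring) x2 right x1
    _ = C * weakNorm x1 q₁ * weakNorm x2 q₂ := mul_right_comm _ _ _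

/-- **Anisotropic inclusion theorem, bilinear case.** -/
theorem bilinear_anisotropic_inclusion
    {X₁ X₂ Y : Type*} [NormedAddCommGroup X₁] [NormedSpace ℝ X₁] [CompleteSpace X₁]
    [NormedAddCommGroup X₂] [NormedSpace ℝ X₂] [CompleteSpace X₂]
    [NormedAddCommGroup Y] [NormedSpace ℝ Y] [CompleteSpace Y]
    (T : X₁ →L[ℝ] X₂ →L[ℝ] Y)
    (r p₁ p₂ q₁ q₂ s₁ s₂ : ℝ) (hr : 1 ≤ r)
    (hp₁ : 1 ≤ p₁) (hp₂ : 1 ≤ p₂) (hq₁ : p₁ ≤ q₁) (hq₂ : p₂ ≤ q₂)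
    (hpos : 0 < 1 / r - 1 / p₁ - 1 / p₂ + 1 / q₁ + 1 / q₂)
    (hs₂ : 1 / s₂ = 1 / r - 1 / p₂ + 1 / q₂)
    (hs₁ : 1 / s₁ = 1 / r - 1 / p₁ - 1 / p₂ + 1 / q₁ + 1 / q₂)
    (C : ℝ) (hC : 0 ≤ C)
    (hT : ∀ (n₁ n₂ : ℕ) (x1 : Fin n₁ → X₁) (x2 : Fin n₂ → X₂),
      (∑ i, ∑ j, ‖T (x1 i) (x2 j)‖ ^ r) ^ (1 / r) ≤
        C * weakNorm x1 p₁ * weakNorm x2 p₂) :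
    ∀ (n₁ n₂ : ℕ) (x1 : Fin n₁ → X₁) (x2 : Fin n₂ → X₂),
      (∑ i, (∑ j, ‖T (x1 i) (x2 j)‖ ^ s₂) ^ (s₁ / s₂)) ^ (1 / s₁) ≤
        C * weakNorm x1 q₁ * weakNorm x2 q₂ :=
  bilinear_anisotropic_inclusion_general T r p₁ p₂ q₁ q₂ s₁ s₂ hr hp₁ hp₂ hq₁ hq₂ hpos hs₂ hs₁ C hC
    hT
end

section
/- Suppose every bounded bilinear form B : c₀ × c₀ → 𝕂 satisfies the Littlewood 4/3 inequality (∑_{i,j} |B(e_i,e_j)|^{4/3})^{3/4} ≤ √2 ‖B‖. Then, via the anisotropic inclusion with r = 4/3, p = (1,1), q = (q₁,q₂) with q₁,q₂ ≥ 1 and 3/4 − 2 + 1/q₁ + 1/q₂ > 0, every such bilinear form satisfies (∑_i (∑_j |B(e_i,e_j)|^{s₂})^{s₁/s₂})^{1/s₁} ≤ √2 ‖B‖ with 1/s₂ = 3/4 − 1 + 1/q₂ and 1/s₁ = 3/4 − 2 + 1/q₁ + 1/q₂. -/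
open scoped BigOperators ZeroAtInfty

/-- The canonical unit vectors of `c₀`. -/
noncomputable def c0unit (i : ℕ) : C₀(ℕ, ℝ) :=
  ⟨⟨Pi.single i 1, continuous_of_discreteTopology⟩, by
    rw [cocompact_eq_atTop (α := ℕ)]
    refine Filter.Tendsto.congr' ?_ tendsto_const_nhds
    filter_upwards [Filter.eventually_gt_atTop i] with n hn
    simp [Pi.single_apply, hn.ne']⟩

/-!
A `tsum` of a non-summable family is `0`, so the assumed inequality says nothing directly
about `B`. It is applied instead to the truncations `B ∘ (P_S, P_T)`, where `P_S` is
multiplication by the indicator of a finite `S ⊆ ℕ`: these have norm at most `‖B‖` and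
finitely many nonzero coefficients, which makes `|B(e_i, e_j)|^{4/3}` summable over `ℕ × ℕ`
with sum at most `(√2‖B‖)^{4/3}`. The exponent conditions give `4/3 ≤ s₂` and `4/3 ≤ s₁`, and
since `ℓ^p` norms decrease in `p`, applying this first along each row and then to the sequence
of row norms bounds the mixed `(s₁, s₂)` norm by the `4/3` norm.
-/

open Finset Real

section LpInclusion

variable {ι : Type*}

theorem summable_rpow_and_tsum_rpow_le_rpow_tsum {g : ι → ℝ} (hg : ∀ i, 0 ≤ g i)
    (hs : Summable g) {r : ℝ} (hr : 1 ≤ r) :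
    Summable (fun i => g i ^ r) ∧ ∑' i, g i ^ r ≤ (∑' i, g i) ^ r := by
  set S := ∑' i, g i
  have hS : 0 ≤ S := tsum_nonneg hg
  have hpow (x : ℝ) (hx : 0 ≤ x) : x ^ r = x * x ^ (r - 1) := by
    rw [← rpow_one_add' hx (by linarith), add_sub_cancel]
  have hbound (i : ι) : g i ^ r ≤ g i * S ^ (r - 1) := by
    rw [hpow _ (hg i)]
    exact mul_le_mul_of_nonneg_left
      (rpow_le_rpow (hg i) (hs.le_tsum i fun j _ => hg j) (by linarith)) (hg i)
  have hsum : Summable fun i => g i ^ r :=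
    .of_nonneg_of_le (fun i => rpow_nonneg (hg i) r) hbound (hs.mul_right _)
  refine ⟨hsum, ?_⟩
  calc ∑' i, g i ^ r ≤ ∑' i, g i * S ^ (r - 1) := hsum.tsum_le_tsum hbound (hs.mul_right _)
    _ = S ^ r := by rw [tsum_mul_right, hpow S hS]

theorem summable_rpow_and_tsum_rpow_rpow_le {f : ι → ℝ} (hf : ∀ i, 0 ≤ f i) {p q : ℝ}
    (hp : 0 < p) (hpq : p ≤ q) (hs : Summable fun i => f i ^ p) :
    Summable (fun i => f i ^ q) ∧ (∑' i, f i ^ q) ^ (1 / q) ≤ (∑' i, f i ^ p) ^ (1 / p) := by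
  have hq : 0 < q := hp.trans_le hpq
  have hpow (i : ι) : (f i ^ p) ^ (q / p) = f i ^ q := by
    rw [← rpow_mul (hf i), mul_div_cancel₀ _ hp.ne']
  obtain ⟨hsum, hle⟩ := summable_rpow_and_tsum_rpow_le_rpow_tsum (fun i => rpow_nonneg (hf i) p)
    hs ((one_le_div hp).2 hpq)
  simp only [hpow] at hsum hle
  refine ⟨hsum, ?_⟩
  have hS : 0 ≤ ∑' i, f i ^ p := tsum_nonneg fun i => rpow_nonneg (hf i) p
  calc (∑' i, f i ^ q) ^ (1 / q) ≤ ((∑' i, f i ^ p) ^ (q / p)) ^ (1 / q) := by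
        gcongr
        exact tsum_nonneg fun i => rpow_nonneg (hf i) q
    _ = (∑' i, f i ^ p) ^ (1 / p) := by
      rw [← rpow_mul hS]
      congr 1
      field_simp

end LpInclusion

theorem tsum_rpow_tsum_rpow_rpow_le {α β : Type*} {a : α → β → ℝ} (ha : ∀ i j, 0 ≤ a i j)
    {r s t : ℝ} (hr : 0 < r) (hrs : r ≤ s) (hrt : r ≤ t)
    (hsum : Summable fun p : α × β => a p.1 p.2 ^ r) :
    (∑' i, (∑' j, a i j ^ t) ^ (s / t)) ^ (1 / s) ≤ (∑' p : α × β, a p.1 p.2 ^ r) ^ (1 / r) := by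
  have hs : 0 < s := hr.trans_le hrs
  set N : α → ℝ := fun i => (∑' j, a i j ^ r) ^ (1 / r)
  have hN (i : α) : 0 ≤ N i := rpow_nonneg (tsum_nonneg fun j => rpow_nonneg (ha i j) r) _
  have hNr (i : α) : N i ^ r = ∑' j, a i j ^ r := by
    rw [← rpow_mul (tsum_nonneg fun j => rpow_nonneg (ha i j) r), one_div_mul_cancel hr.ne',
      rpow_one]
  have hT (i : α) : 0 ≤ ∑' j, a i j ^ t := tsum_nonneg fun j => rpow_nonneg (ha i j) t
  have hrow (i : α) : (∑' j, a i j ^ t) ^ (s / t) ≤ N i ^ s := by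
    calc (∑' j, a i j ^ t) ^ (s / t) = ((∑' j, a i j ^ t) ^ (1 / t)) ^ s := by
          rw [← rpow_mul (hT i), one_div_mul_eq_div]
      _ ≤ N i ^ s := rpow_le_rpow (rpow_nonneg (hT i) _)
          (summable_rpow_and_tsum_rpow_rpow_le (ha i) hr hrt (hsum.prod_factor i)).2 hs.le
  obtain ⟨hNs, hNle⟩ := summable_rpow_and_tsum_rpow_rpow_le hN hr hrs
    (by simpa only [hNr] using hsum.prod)
  calc (∑' i, (∑' j, a i j ^ t) ^ (s / t)) ^ (1 / s) ≤ (∑' i, N i ^ s) ^ (1 / s) := by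
        gcongr
        · exact tsum_nonneg fun i => rpow_nonneg (hT i) _
        · exact hNs.of_nonneg_of_le (fun i => rpow_nonneg (hT i) _) hrow
        · exact hrow _
    _ ≤ (∑' i, N i ^ r) ^ (1 / r) := hNle
    _ = (∑' p : α × β, a p.1 p.2 ^ r) ^ (1 / r) := by simp only [hNr, hsum.tsum_prod]

theorem summable_and_tsum_le_of_sum_product_le {α β : Type*} {F : α × β → ℝ} (hF : ∀ p, 0 ≤ F p)
    {C : ℝ} (h : ∀ S T, ∑ p ∈ S ×ˢ T, F p ≤ C) : Summable F ∧ ∑' p, F p ≤ C := by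
  classical
  have hfin (u : Finset (α × β)) : ∑ p ∈ u, F p ≤ C :=
    (sum_le_sum_of_subset_of_nonneg (fun p hp => mem_product.2
      ⟨mem_image_of_mem _ hp, mem_image_of_mem _ hp⟩) fun p _ _ => hF p).trans (h _ _)
  have hsum : Summable F := summable_of_sum_le hF hfin
  exact ⟨hsum, hsum.tsum_le_of_sum_le hfin⟩

theorem le_anisotropic_exponents {r q₁ q₂ s₁ s₂ : ℝ} (hr : 0 < r) (hq₁ : 1 ≤ q₁)
    (hq₂ : 1 ≤ q₂) (hs₂ : 1 / s₂ = 1 / r - 1 + 1 / q₂) (hs₁ : 1 / s₁ = 1 / r - 2 + 1 / q₁ + 1 / q₂)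
    (hs₁_pos : 0 < 1 / s₁) : r ≤ s₂ ∧ r ≤ s₁ := by
  have h₁ : 1 / q₁ ≤ 1 := (div_le_one (by linarith)).2 hq₁
  have h₂ : 1 / q₂ ≤ 1 := (div_le_one (by linarith)).2 hq₂
  have hs₂_pos : 0 < 1 / s₂ := by linarith
  exact ⟨(one_div_le_one_div (one_div_pos.1 hs₂_pos) hr).1 (by linarith),
    (one_div_le_one_div (one_div_pos.1 hs₁_pos) hr).1 (by linarith)⟩

theorem c0unit_apply (i n : ℕ) : c0unit i n = if n = i then 1 else 0 := Pi.single_apply i 1 n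

noncomputable def c0indicator (S : Finset ℕ) : C₀(ℕ, ℝ) :=
  ⟨⟨fun n => if n ∈ S then 1 else 0, continuous_of_discreteTopology⟩, by
    rw [Filter.cocompact_eq_cofinite]
    refine tendsto_const_nhds.congr' ?_
    filter_upwards [S.eventually_cofinite_notMem] with n hn
    simp [hn]⟩

theorem c0indicator_apply (S : Finset ℕ) (n : ℕ) : c0indicator S n = if n ∈ S then 1 else 0 := rfl

theorem c0indicator_mul_c0unit (S : Finset ℕ) (i : ℕ) :
    c0indicator S * c0unit i = if i ∈ S then c0unit i else 0 := by
  ext n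
  by_cases hn : n = i <;> split_ifs <;> simp_all [c0indicator_apply, c0unit_apply]

theorem norm_c0indicator_le (S : Finset ℕ) : ‖c0indicator S‖ ≤ 1 := by
  rw [← ZeroAtInftyContinuousMap.norm_toBCF_eq_norm]
  refine (BoundedContinuousFunction.norm_le zero_le_one).2 fun n => ?_
  simp only [ZeroAtInftyContinuousMap.toBCF_apply, c0indicator_apply]
  split_ifs <;> simp

section Truncation

variable {ι G : Type*} [Fintype ι] [NormedAddCommGroup G] [NormedSpace ℝ G]

noncomputable def c0truncate (B : ContinuousMultilinearMap ℝ (fun _ : ι => C₀(ℕ, ℝ)) G)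
    (S : ι → Finset ℕ) : ContinuousMultilinearMap ℝ (fun _ : ι => C₀(ℕ, ℝ)) G :=
  B.compContinuousLinearMap fun k => ContinuousLinearMap.mul ℝ C₀(ℕ, ℝ) (c0indicator (S k))

theorem norm_c0truncate_le (B : ContinuousMultilinearMap ℝ (fun _ : ι => C₀(ℕ, ℝ)) G)
    (S : ι → Finset ℕ) : ‖c0truncate B S‖ ≤ ‖B‖ := by
  refine (B.norm_compContinuousLinearMap_le _).trans (mul_le_of_le_one_right (norm_nonneg B) ?_)
  exact Finset.prod_le_one (fun _ _ => norm_nonneg _) fun k _ =>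
    (ContinuousLinearMap.opNorm_mul_apply_le ℝ _ _).trans (norm_c0indicator_le (S k))

theorem c0truncate_apply_c0unit (B : ContinuousMultilinearMap ℝ (fun _ : ι => C₀(ℕ, ℝ)) G)
    (S : ι → Finset ℕ) (i : ι → ℕ) :
    c0truncate B S (fun k => c0unit (i k)) =
      if ∀ k, i k ∈ S k then B (fun k => c0unit (i k)) else 0 := by
  simp only [c0truncate, ContinuousMultilinearMap.compContinuousLinearMap_apply,
    ContinuousLinearMap.mul_apply', c0indicator_mul_c0unit]
  split_ifs with h
  · simp [h]
  · obtain ⟨k, hk⟩ := not_forall.1 h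
    exact B.map_coord_zero k (if_neg hk)

end Truncation

theorem tsum_tsum_c0truncate_eq_sum (B : ContinuousMultilinearMap ℝ (fun _ : Fin 2 => C₀(ℕ, ℝ)) ℝ)
    (S T : Finset ℕ) {φ : ℝ → ℝ} (hφ : φ 0 = 0) :
    ∑' i, ∑' j, φ (c0truncate B ![S, T] ![c0unit i, c0unit j]) =
      ∑ p ∈ S ×ˢ T, φ (B ![c0unit p.1, c0unit p.2]) := by
  have hentry : ∀ i j, φ (c0truncate B ![S, T] ![c0unit i, c0unit j]) =
      if i ∈ S then (if j ∈ T then φ (B ![c0unit i, c0unit j]) else 0) else 0 := by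
    intro i j
    have hvec (x y : ℕ) : ![c0unit x, c0unit y] = fun k => c0unit (![x, y] k) := by
      ext1 k; fin_cases k <;> rfl
    rw [hvec, c0truncate_apply_c0unit, ← hvec]
    by_cases hi : i ∈ S <;> by_cases hj : j ∈ T <;> simp [Fin.forall_fin_two, hi, hj, hφ]
  simp only [hentry]
  rw [sum_product, tsum_eq_sum (s := S) fun i hi => by simp [hi]]
  refine sum_congr rfl fun i hi => ?_
  rw [tsum_eq_sum (s := T) fun j hj => by simp [hj]]
  simp [hi]

theorem sum_product_rpow_le_of_littlewood
    (hLittlewood : ∀ B : ContinuousMultilinearMap ℝ (fun _ : Fin 2 => C₀(ℕ, ℝ)) ℝ,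
      (∑' i : ℕ, ∑' j : ℕ, |B ![c0unit i, c0unit j]| ^ ((4 : ℝ) / 3)) ^ ((3 : ℝ) / 4) ≤
        Real.sqrt 2 * ‖B‖)
    (B : ContinuousMultilinearMap ℝ (fun _ : Fin 2 => C₀(ℕ, ℝ)) ℝ) (S T : Finset ℕ) :
    ∑ p ∈ S ×ˢ T, |B ![c0unit p.1, c0unit p.2]| ^ ((4 : ℝ) / 3) ≤
      (Real.sqrt 2 * ‖B‖) ^ ((4 : ℝ) / 3) := by
  have h := (hLittlewood (c0truncate B ![S, T])).trans
    (mul_le_mul_of_nonneg_left (norm_c0truncate_le B _) (sqrt_nonneg 2))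
  rw [tsum_tsum_c0truncate_eq_sum B S T (φ := fun x => |x| ^ ((4 : ℝ) / 3)) (by norm_num)] at h
  have hnonneg : 0 ≤ ∑ p ∈ S ×ˢ T, |B ![c0unit p.1, c0unit p.2]| ^ ((4 : ℝ) / 3) :=
    sum_nonneg fun p _ => rpow_nonneg (abs_nonneg _) _
  calc ∑ p ∈ S ×ˢ T, |B ![c0unit p.1, c0unit p.2]| ^ ((4 : ℝ) / 3)
      = ((∑ p ∈ S ×ˢ T, |B ![c0unit p.1, c0unit p.2]| ^ ((4 : ℝ) / 3)) ^ ((3 : ℝ) / 4)) ^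
          ((4 : ℝ) / 3) := by rw [← rpow_mul hnonneg]; norm_num
    _ ≤ (Real.sqrt 2 * ‖B‖) ^ ((4 : ℝ) / 3) := by gcongr

/-- **From Littlewood's 4/3 inequality to the anisotropic bilinear
Hardy–Littlewood estimate.** If every bounded bilinear form on `c₀ × c₀`
satisfies `(∑_{i,j}|B(e_i,e_j)|^{4/3})^{3/4} ≤ √2‖B‖`, then for `q₁, q₂ ≥ 1`
with `3/4 − 2 + 1/q₁ + 1/q₂ > 0` and `1/s₂ = 3/4 − 1 + 1/q₂`,
`1/s₁ = 3/4 − 2 + 1/q₁ + 1/q₂`, every such form satisfies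
`(∑_i (∑_j |B(e_i,e_j)|^{s₂})^{s₁/s₂})^{1/s₁} ≤ √2‖B‖`. -/
theorem littlewood_to_anisotropic
    (hLittlewood : ∀ B : ContinuousMultilinearMap ℝ (fun _ : Fin 2 => C₀(ℕ, ℝ)) ℝ,
      (∑' i : ℕ, ∑' j : ℕ, |B ![c0unit i, c0unit j]| ^ ((4 : ℝ) / 3)) ^ ((3 : ℝ) / 4) ≤
        Real.sqrt 2 * ‖B‖)
    (q₁ q₂ s₁ s₂ : ℝ) (hq₁ : 1 ≤ q₁) (hq₂ : 1 ≤ q₂)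
    (hpos : 0 < 3 / 4 - 2 + 1 / q₁ + 1 / q₂)
    (hs₂ : 1 / s₂ = 3 / 4 - 1 + 1 / q₂)
    (hs₁ : 1 / s₁ = 3 / 4 - 2 + 1 / q₁ + 1 / q₂) :
    ∀ B : ContinuousMultilinearMap ℝ (fun _ : Fin 2 => C₀(ℕ, ℝ)) ℝ,
      (∑' i : ℕ, (∑' j : ℕ, |B ![c0unit i, c0unit j]| ^ s₂) ^ (s₁ / s₂)) ^ (1 / s₁) ≤
        Real.sqrt 2 * ‖B‖ := by
  intro B
  obtain ⟨hs₂_ge, hs₁_ge⟩ := le_anisotropic_exponents (r := 4 / 3) (by norm_num) hq₁ hq₂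
    (by rw [hs₂]; norm_num) (by rw [hs₁]; norm_num) (hs₁ ▸ hpos)
  obtain ⟨hsum, hle⟩ := summable_and_tsum_le_of_sum_product_le
    (fun p => rpow_nonneg (abs_nonneg _) _) (sum_product_rpow_le_of_littlewood hLittlewood B)
  calc (∑' i, (∑' j, |B ![c0unit i, c0unit j]| ^ s₂) ^ (s₁ / s₂)) ^ (1 / s₁)
      ≤ (∑' p : ℕ × ℕ, |B ![c0unit p.1, c0unit p.2]| ^ ((4 : ℝ) / 3)) ^ (1 / (4 / 3 : ℝ)) :=
        tsum_rpow_tsum_rpow_rpow_le (fun i j => abs_nonneg _) (by norm_num) hs₁_ge hs₂_ge hsum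
    _ ≤ ((Real.sqrt 2 * ‖B‖) ^ ((4 : ℝ) / 3)) ^ (1 / (4 / 3 : ℝ)) := by gcongr
    _ = Real.sqrt 2 * ‖B‖ := by
        rw [← rpow_mul (by positivity)]
        norm_num
end
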